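/- Let F be a nontrivial finite field, t ≥ 1, v ≥ 1, N ≥ 1, and Γ ≥ 1. Let α : Fin Γ → F be injective with α_b ≠ 0 for all b. For each client i ∈ [N], let G_i : Ω → (Fin v → F) be its gradient, K_i : Ω → (Fin v → F) its pad, and R_i : Ω → (Fin t → F) its sharing randomness, where the 2N random variables K_1, R_1, …, K_N, R_N are mutually independent, each K_i is uniform on F^v, each R_i is uniform on F^t, and the tuple (K_i, R_i)_{i∈[N]} is independent of (G_1, …, G_N). Define f_i(x) := Σ_{j=1}^{v} (G_{i,j} + K_{i,j}) x^{j−1} + Σ_{j=1}^{t} R_{i,j} x^{v+j−1}. Then for every subset T ⊆ Fin Γ with |T| ≤ t, the family of observations (f_i(α_b))_{i∈[N], b∈T} is independent of (G_1, …, G_N). -/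

import Mathlib

/-!
Conditionally on the gradients being `g`, the observations are `E (g + K, R)`, where `E` is the
additive map sending the coefficient vectors of the sharing polynomials to their values at the
nodes of `T`. As `(K, R)` is uniform and independent of `G`, their law is the image of the
uniform distribution under the bijection `(k, r) ↦ (g + k, r)` followed by `E`. Lagrange
interpolation makes `E` surjective already on the masking coefficients, because `|T| ≤ t` and the
nodes are distinct and nonzero; and a surjective homomorphism of finite groups pushes the uniform
distribution to the uniform distribution. So the conditional law of the observations is uniform,
whatever `g` is.
-/

open MeasureTheory ProbabilityTheory
open scoped ENNReal Finset

namespace PMF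

section Uniform

variable {α β : Type*} [Fintype α] [Nonempty α] [MeasurableSpace α] [MeasurableSingletonClass α]
  [Fintype β] [Nonempty β] [MeasurableSpace β] [MeasurableSingletonClass β]

theorem toMeasure_uniformOfFintype_singleton (a : α) :
    (uniformOfFintype α).toMeasure {a} = (Fintype.card α : ℝ≥0∞)⁻¹ := by
  rw [toMeasure_apply_singleton _ _ (measurableSet_singleton a), uniformOfFintype_apply]

theorem eq_uniformOfFintype_toMeasure_of_singleton {ν : Measure α}
    (h : ∀ a, ν {a} = (Fintype.card α : ℝ≥0∞)⁻¹) : ν = (uniformOfFintype α).toMeasure :=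
  Measure.ext_of_singleton fun a => by rw [h, toMeasure_uniformOfFintype_singleton]

theorem map_uniformOfFintype_equiv (e : α ≃ β) :
    (uniformOfFintype α).toMeasure.map e = (uniformOfFintype β).toMeasure := by
  refine eq_uniformOfFintype_toMeasure_of_singleton fun b => ?_
  have hpre : e ⁻¹' {b} = {e.symm b} := by ext; simp [Equiv.eq_symm_apply]
  rw [Measure.map_apply (measurable_of_finite e) (measurableSet_singleton b), hpre,
    toMeasure_uniformOfFintype_singleton, Fintype.card_congr e]

theorem map_uniformOfFintype_of_surjective {A B : Type*} [AddGroup A] [Fintype A]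
    [MeasurableSpace A] [MeasurableSingletonClass A] [AddGroup B] [Fintype B]
    [MeasurableSpace B] [MeasurableSingletonClass B] (L : A →+ B) (hL : Function.Surjective L) :
    (uniformOfFintype A).toMeasure.map L = (uniformOfFintype B).toMeasure := by
  classical
  have hfiber (b : B) : #{a | L a = b} = #{a | L a = 0} :=
    AddMonoidHom.card_fiber_eq_of_mem_range L (hL b) (hL 0)
  have hcard : Fintype.card A = Fintype.card B * #{a | L a = 0} := by
    rw [← Finset.card_univ, Finset.card_eq_sum_card_fiberwise (f := L) (t := Finset.univ)
      (fun _ _ => Finset.mem_univ _)]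
    simp [hfiber]
  have hkernel : #{a | L a = 0} ≠ 0 := Finset.card_ne_zero.2 ⟨0, by simp⟩
  refine eq_uniformOfFintype_toMeasure_of_singleton fun b => ?_
  have hpre : L ⁻¹' {b} = ↑({a | L a = b} : Finset A) := by ext; simp
  simp only [Measure.map_apply (measurable_of_finite L) (measurableSet_singleton b), hpre,
    toMeasure_apply_finset, uniformOfFintype_apply]
  rw [Finset.sum_const, nsmul_eq_mul, hfiber b, hcard, Nat.cast_mul,
    ENNReal.mul_inv (by simp) (by simp), mul_left_comm,
    ENNReal.mul_inv_cancel (by exact_mod_cast hkernel) (by simp), mul_one]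

theorem pi_uniformOfFintype {ι : Type*} [Fintype ι] [DecidableEq ι] {β : ι → Type*}
    [∀ i, Fintype (β i)] [∀ i, Nonempty (β i)] [∀ i, MeasurableSpace (β i)]
    [∀ i, MeasurableSingletonClass (β i)] :
    Measure.pi (fun i => (uniformOfFintype (β i)).toMeasure)
      = (uniformOfFintype (∀ i, β i)).toMeasure := by
  refine eq_uniformOfFintype_toMeasure_of_singleton fun b => ?_
  rw [← Set.univ_pi_singleton, Measure.pi_pi]
  simp only [toMeasure_uniformOfFintype_singleton, Fintype.card_pi, Nat.cast_prod]
  exact (ENNReal.prod_inv_distrib fun i _ j _ _ => by simp).symm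

theorem prod_uniformOfFintype :
    (uniformOfFintype α).toMeasure.prod (uniformOfFintype β).toMeasure
      = (uniformOfFintype (α × β)).toMeasure := by
  refine eq_uniformOfFintype_toMeasure_of_singleton fun ab => ?_
  rw [← Set.singleton_prod_singleton, Measure.prod_prod, toMeasure_uniformOfFintype_singleton,
    toMeasure_uniformOfFintype_singleton, Fintype.card_prod, Nat.cast_mul,
    ENNReal.mul_inv (by simp) (by simp)]

end Uniform

end PMF

namespace ProbabilityTheory

variable {Ω : Type*} [MeasurableSpace Ω] {μ : Measure Ω}

theorem iIndepFun.map_prodMk_eq_prod_pi [IsProbabilityMeasure μ] {ι ι' : Type*} [Fintype ι]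
    [Fintype ι'] {β : ι ⊕ ι' → Type*} {m : ∀ s, MeasurableSpace (β s)} {f : ∀ s, Ω → β s}
    (hf : ∀ s, Measurable (f s)) (hind : iIndepFun f μ) :
    μ.map (fun ω => (fun i => f (.inl i) ω, fun i => f (.inr i) ω))
      = (Measure.pi fun i => μ.map (f (.inl i))).prod (Measure.pi fun i => μ.map (f (.inr i))) := by
  have hcomp : (fun ω => (fun i => f (.inl i) ω, fun i => f (.inr i) ω))
      = MeasurableEquiv.sumPiEquivProdPi β ∘ fun ω s => f s ω := rfl
  rw [hcomp, ← Measure.map_map (MeasurableEquiv.measurable _) (measurable_pi_lambda _ hf),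
    hind.map_fun_eq_pi_map fun s => (hf s).aemeasurable,
    (measurePreserving_sumPiEquivProdPi _).map_eq]

theorem IndepFun.indepFun_of_forall_map_eq [IsProbabilityMeasure μ] {α β γ : Type*}
    [MeasurableSpace α] [MeasurableSpace β] [MeasurableSpace γ] {U : Ω → α} {G : Ω → β}
    (hU : Measurable U) (hG : Measurable G) (hUG : IndepFun U G μ) {φ : β → α → γ}
    (hφ : Measurable (Function.uncurry φ)) {ν : Measure γ} [SFinite ν]
    (hν : ∀ g, (μ.map U).map (φ g) = ν) :
    IndepFun (fun ω => φ (G ω) (U ω)) G μ := by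
  have hφg (g : β) : Measurable (φ g) := hφ.comp measurable_prodMk_left
  have hΦ : Measurable fun p : α × β => (φ p.2 p.1, p.2) :=
    (hφ.comp measurable_swap).prodMk measurable_snd
  have hjoint : μ.map (fun ω => (φ (G ω) (U ω), G ω)) = ν.prod (μ.map G) := by
    have hcomp : (fun ω => (φ (G ω) (U ω), G ω))
        = (fun p : α × β => (φ p.2 p.1, p.2)) ∘ fun ω => (U ω, G ω) := rfl
    rw [hcomp, ← Measure.map_map hΦ (hU.prodMk hG),
      (indepFun_iff_map_prod_eq_prod_map_map hU.aemeasurable hG.aemeasurable).1 hUG]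
    ext s hs
    rw [Measure.map_apply hΦ hs, Measure.prod_apply_symm (hΦ hs), Measure.prod_apply_symm hs]
    refine lintegral_congr fun g => ?_
    rw [← hν g, Measure.map_apply (hφg g) (measurable_prodMk_right hs)]
    rfl
  have hX : Measurable fun ω => φ (G ω) (U ω) := hφ.comp (hG.prodMk hU)
  rw [indepFun_iff_map_prod_eq_prod_map_map hX.aemeasurable hG.aemeasurable, hjoint]
  congr
  calc ν = (ν.prod (μ.map G)).map Prod.fst := by
        rw [Measure.map_fst_prod, Measure.map_apply hG .univ, Set.preimage_univ, measure_univ,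
          one_smul]
    _ = μ.map (fun ω => φ (G ω) (U ω)) := by
      rw [← hjoint, Measure.map_map measurable_fst (hX.prodMk hG)]
      rfl

end ProbabilityTheory

theorem Lagrange.exists_sum_mul_pow_eq_of_card_le {F ι : Type*} [Field F] [DecidableEq ι]
    {s : Finset ι} {x : ι → F} (hx : Set.InjOn x s) {t : ℕ} (hs : #s ≤ t) (y : ι → F) :
    ∃ c : Fin t → F, ∀ i ∈ s, ∑ j, c j * x i ^ (j : ℕ) = y i := by
  have hdeg : interpolate s x y ∈ Polynomial.degreeLT F t :=
    Polynomial.mem_degreeLT.2 <| (degree_interpolate_lt y hx).trans_le (by exact_mod_cast hs)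
  refine ⟨Polynomial.degreeLTEquiv F t ⟨_, hdeg⟩, fun i hi => ?_⟩
  rw [← Polynomial.eval_eq_sum_degreeLTEquiv hdeg, eval_interpolate_at_node y hx hi]

section SecretSharing

variable {F ι S : Type*} [Field F]

def shareEval (v t : ℕ) (x : S → F) : (ι → Fin v → F) × (ι → Fin t → F) →+ (ι × S → F) where
  toFun c p := ∑ j, c.1 p.1 j * x p.2 ^ (j : ℕ) + ∑ j, c.2 p.1 j * x p.2 ^ (v + (j : ℕ))
  map_zero' := by ext; simp
  map_add' c d := by
    ext p
    simp only [Prod.fst_add, Prod.snd_add, Pi.add_apply, add_mul, Finset.sum_add_distrib]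
    ring

theorem shareEval_surjective [Fintype S] {v t : ℕ} {x : S → F} (hx : Function.Injective x)
    (hx0 : ∀ b, x b ≠ 0) (hS : Fintype.card S ≤ t) :
    Function.Surjective (shareEval (ι := ι) v t x) := by
  classical
  intro w
  choose c hc using fun i => Lagrange.exists_sum_mul_pow_eq_of_card_le hx.injOn
    (s := Finset.univ) hS (fun b => w (i, b) / x b ^ v)
  refine ⟨(0, c), funext fun p => ?_⟩
  simp only [shareEval, AddMonoidHom.coe_mk, ZeroHom.coe_mk, Pi.zero_apply, zero_mul,
    Finset.sum_const_zero, zero_add, pow_add, mul_left_comm _ (x p.2 ^ v), ← Finset.mul_sum,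
    hc p.1 p.2 (Finset.mem_univ _)]
  exact mul_div_cancel₀ _ (pow_ne_zero v (hx0 p.2))

end SecretSharing

theorem base_station_observations_indep_of_gradients
    {Ω : Type*} [MeasurableSpace Ω] (μ : Measure Ω) [IsProbabilityMeasure μ]
    {F : Type*} [Field F] [Fintype F]
    [MeasurableSpace F] [MeasurableSingletonClass F]
    {t v N Γ : ℕ}
    (α : Fin Γ → F) (hα : Function.Injective α) (hα0 : ∀ b, α b ≠ 0)
    (G : Fin N → Ω → Fin v → F) (hG : ∀ i, Measurable (G i))
    (K : Fin N → Ω → Fin v → F) (hK : ∀ i, Measurable (K i))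
    (R : Fin N → Ω → Fin t → F) (hR : ∀ i, Measurable (R i))
    (hKR : iIndepFun
      (β := fun s : Fin N ⊕ Fin N => match s with
        | .inl _ => Fin v → F
        | .inr _ => Fin t → F)
      (m := fun s => match s with
        | .inl _ => inferInstance
        | .inr _ => inferInstance)
      (fun s => match s with
        | .inl i => K i
        | .inr i => R i) μ)
    (hKunif : ∀ i, Measure.map (K i) μ = (PMF.uniformOfFintype (Fin v → F)).toMeasure)
    (hRunif : ∀ i, Measure.map (R i) μ = (PMF.uniformOfFintype (Fin t → F)).toMeasure)
    (hindepG : IndepFun (fun ω => (fun i => K i ω, fun i => R i ω))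
      (fun ω i => G i ω) μ) :
    ∀ T : Finset (Fin Γ), T.card ≤ t →
      IndepFun
        (fun ω => fun p : Fin N × {b // b ∈ T} =>
          ∑ j, (G p.1 ω j + K p.1 ω j) * (α p.2.1) ^ (j : ℕ)
            + ∑ j, R p.1 ω j * (α p.2.1) ^ (v + (j : ℕ)))
        (fun ω i => G i ω) μ := by
  intro T hT
  let x : {b // b ∈ T} → F := fun b => α b
  have hsurj : Function.Surjective (shareEval (ι := Fin N) v t x) :=
    shareEval_surjective (hα.comp Subtype.val_injective) (hα0 ·) (by simpa using hT)
  have hpads : μ.map (fun ω => (fun i => K i ω, fun i => R i ω))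
      = (PMF.uniformOfFintype _).toMeasure := by
    have hpi := hKR.map_prodMk_eq_prod_pi fun s => by
      cases s <;> [exact hK _; exact hR _]
    dsimp only at hpi
    rw [hpi, funext hKunif, funext hRunif, PMF.pi_uniformOfFintype, PMF.pi_uniformOfFintype,
      PMF.prod_uniformOfFintype]
  refine hindepG.indepFun_of_forall_map_eq (φ := fun g c => shareEval v t x (g + c.1, c.2))
    ((measurable_pi_lambda _ hK).prodMk (measurable_pi_lambda _ hR)) (measurable_pi_lambda _ hG)
    (measurable_of_finite _) (ν := (PMF.uniformOfFintype _).toMeasure) fun g => ?_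
  have hshift : (fun c => shareEval v t x (g + c.1, c.2))
      = shareEval v t x ∘ (Equiv.addLeft g).prodCongr (Equiv.refl _) := rfl
  rw [hpads, hshift, ← Measure.map_map (measurable_of_finite _) (measurable_of_finite _),
    PMF.map_uniformOfFintype_equiv, PMF.map_uniformOfFintype_of_surjective _ hsurj]
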